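/- arXiv:2307.08329 — 5 statements merged into one kernel-verified Lean document; each statement's English description precedes it below -/
import Mathlib

section
/- Let A : S¹ × S¹ → S² be defined by A(s,x) = (sin s cos x, sin s sin x, cos s) for s ∈ [0,π] and A(s,x) = (−sin s cos x, sin s sin x, cos s) for s ∈ (π,2π) (identifying S¹ with ℝ/2πℤ). Then A is a continuous map from the torus to the 2-sphere and its topological degree equals 2. -/
open Real Set

/-- First component of the map `A : S¹ × S¹ → S²`,
`A(s,x) = (sin s cos x, sin s sin x, cos s)` for `s ∈ [0,π]` (i.e. `sin s ≥ 0` mod `2π`) and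
`A(s,x) = (−sin s cos x, sin s sin x, cos s)` for `s ∈ (π,2π)`. -/
noncomputable def A1 (s x : ℝ) : ℝ :=
  if 0 ≤ Real.sin s then Real.sin s * Real.cos x else -(Real.sin s * Real.cos x)

noncomputable def A2 (s x : ℝ) : ℝ := Real.sin s * Real.sin x

noncomputable def A3 (s x : ℝ) : ℝ := Real.cos s

/-- Jacobian determinant `det (∂ₛA, ∂ₓA, A)`. -/
noncomputable def jacA (s x : ℝ) : ℝ :=
  Matrix.det !![deriv (fun s' => A1 s' x) s, deriv (fun x' => A1 s x') x, A1 s x;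
    deriv (fun s' => A2 s' x) s, deriv (fun x' => A2 s x') x, A2 s x;
    deriv (fun s' => A3 s' x) s, deriv (fun x' => A3 s x') x, A3 s x]

lemma A1_abs (s x : ℝ) : A1 s x = |Real.sin s| * Real.cos x := by
  unfold A1; split
  · rw [abs_of_nonneg ‹_›]
  · rw [abs_of_neg (lt_of_not_ge ‹_›)]; ring

lemma sin_3pi2 : Real.sin (3*π/2) = -1 := by
  have h : 3*π/2 = π + π/2 := by ring
  rw [h, Real.sin_add]; simp

lemma cos_3pi2 : Real.cos (3*π/2) = 0 := by
  have h : 3*π/2 = π + π/2 := by ring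
  rw [h, Real.cos_add]; simp

lemma jac1 : jacA (π/2) 0 = 1 := by
  have h1 : deriv (fun s' => A1 s' 0) (π/2) = 0 := by
    have hopen : IsOpen {s' : ℝ | 0 < Real.sin s'} :=
      isOpen_lt continuous_const Real.continuous_sin
    have hmem : (π/2) ∈ {s' : ℝ | 0 < Real.sin s'} := by
      simp [Real.sin_pi_div_two]
    have hev : (fun s' => A1 s' 0) =ᶠ[nhds (π/2)] Real.sin := by
      filter_upwards [hopen.mem_nhds hmem] with s' hs'
      unfold A1; rw [if_pos hs'.le]; simp
    rw [hev.deriv_eq, Real.deriv_sin, Real.cos_pi_div_two]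
  have h2 : deriv (fun x' => A1 (π/2) x') 0 = 0 := by
    have he : (fun x' => A1 (π/2) x') = Real.cos := by
      funext x'; rw [A1_abs]; simp [Real.sin_pi_div_two]
    rw [he, Real.deriv_cos, Real.sin_zero, neg_zero]
  have h3 : deriv (fun s' => A2 s' 0) (π/2) = 0 := by
    have he : (fun s' => A2 s' 0) = fun _ => (0:ℝ) := by funext s'; simp [A2]
    simp [he]
  have h4 : deriv (fun x' => A2 (π/2) x') 0 = 1 := by
    have he : (fun x' => A2 (π/2) x') = Real.sin := by
      funext x'; simp [A2, Real.sin_pi_div_two]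
    rw [he, Real.deriv_sin, Real.cos_zero]
  have h5 : deriv (fun s' => A3 s' 0) (π/2) = -1 := by
    have he : (fun s' => A3 s' 0) = Real.cos := rfl
    rw [he, Real.deriv_cos, Real.sin_pi_div_two]
  have h6 : deriv (fun x' => A3 (π/2) x') 0 = 0 := by
    have he : (fun x' => A3 (π/2) x') = fun _ => Real.cos (π/2) := rfl
    simp [he]
  unfold jacA
  rw [h1, h2, h3, h4, h5, h6]
  rw [Matrix.det_fin_three]
  simp [A1, A2, A3, Real.sin_pi_div_two, Real.cos_pi_div_two]

lemma jac2 : jacA (3*π/2) 0 = 1 := by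
  have h1 : deriv (fun s' => A1 s' 0) (3*π/2) = 0 := by
    have hopen : IsOpen {s' : ℝ | Real.sin s' < 0} :=
      isOpen_lt Real.continuous_sin continuous_const
    have hmem : (3*π/2) ∈ {s' : ℝ | Real.sin s' < 0} := by
      simp [sin_3pi2]
    have hev : (fun s' => A1 s' 0) =ᶠ[nhds (3*π/2)] (fun s' => -Real.sin s') := by
      filter_upwards [hopen.mem_nhds hmem] with s' hs'
      unfold A1; rw [if_neg (not_le.mpr hs')]; simp
    rw [hev.deriv_eq]
    have : deriv (fun s' => -Real.sin s') (3*π/2) = -Real.cos (3*π/2) := by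
      simp [Real.deriv_sin]
    rw [this, cos_3pi2, neg_zero]
  have h2 : deriv (fun x' => A1 (3*π/2) x') 0 = 0 := by
    have he : (fun x' => A1 (3*π/2) x') = Real.cos := by
      funext x'; rw [A1_abs, sin_3pi2]; simp
    rw [he, Real.deriv_cos, Real.sin_zero, neg_zero]
  have h3 : deriv (fun s' => A2 s' 0) (3*π/2) = 0 := by
    have he : (fun s' => A2 s' 0) = fun _ => (0:ℝ) := by funext s'; simp [A2]
    simp [he]
  have h4 : deriv (fun x' => A2 (3*π/2) x') 0 = -1 := by
    have he : (fun x' => A2 (3*π/2) x') = fun x' => -Real.sin x' := by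
      funext x'; simp [A2, sin_3pi2]
    rw [he]
    have : deriv (fun x' => -Real.sin x') 0 = -Real.cos 0 := by simp [Real.deriv_sin]
    rw [this, Real.cos_zero]
  have h5 : deriv (fun s' => A3 s' 0) (3*π/2) = 1 := by
    have he : (fun s' => A3 s' 0) = Real.cos := rfl
    rw [he, Real.deriv_cos, sin_3pi2, neg_neg]
  have h6 : deriv (fun x' => A3 (3*π/2) x') 0 = 0 := by
    have he : (fun x' => A3 (3*π/2) x') = fun _ => Real.cos (3*π/2) := rfl
    simp [he]
  unfold jacA
  rw [h1, h2, h3, h4, h5, h6]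
  rw [Matrix.det_fin_three]
  simp [A1_abs, A2, A3, sin_3pi2, cos_3pi2]

/-- `A` is a continuous (doubly `2π`-periodic) map from the torus to the unit 2-sphere, and its
topological degree, computed at the regular value `p = (1,0,0)` as the signed count of
preimages, equals `2`. -/
theorem stmt0 :
    Continuous (fun p : ℝ × ℝ => (A1 p.1 p.2, A2 p.1 p.2, A3 p.1 p.2)) ∧
    (∀ s x : ℝ, A1 (s + 2*π) x = A1 s x ∧ A2 (s + 2*π) x = A2 s x ∧ A3 (s + 2*π) x = A3 s x ∧
      A1 s (x + 2*π) = A1 s x ∧ A2 s (x + 2*π) = A2 s x ∧ A3 s (x + 2*π) = A3 s x) ∧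
    (∀ s x : ℝ, (A1 s x)^2 + (A2 s x)^2 + (A3 s x)^2 = 1) ∧
    ({p : ℝ × ℝ | p.1 ∈ Ico 0 (2*π) ∧ p.2 ∈ Ico 0 (2*π) ∧
        A1 p.1 p.2 = 1 ∧ A2 p.1 p.2 = 0 ∧ A3 p.1 p.2 = 0}
      = {(π/2, 0), (3*π/2, 0)}) ∧
    Real.sign (jacA (π/2) 0) + Real.sign (jacA (3*π/2) 0) = 2 := by
  refine ⟨?_, ?_, ?_, ?_, ?_⟩
  · -- continuity
    have he : (fun p : ℝ × ℝ => (A1 p.1 p.2, A2 p.1 p.2, A3 p.1 p.2)) =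
        fun p : ℝ × ℝ => (|Real.sin p.1| * Real.cos p.2,
          Real.sin p.1 * Real.sin p.2, Real.cos p.1) := by
      funext p; rw [A1_abs]; rfl
    rw [he]
    fun_prop
  · -- periodicity
    intro s x
    have hs : Real.sin (s + 2*π) = Real.sin s := by
      rw [show s + 2*π = s + 2*π from rfl, Real.sin_add_two_pi]
    have hc : Real.cos (s + 2*π) = Real.cos s := Real.cos_add_two_pi s
    have hsx : Real.sin (x + 2*π) = Real.sin x := Real.sin_add_two_pi x
    have hcx : Real.cos (x + 2*π) = Real.cos x := Real.cos_add_two_pi x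
    refine ⟨?_, ?_, ?_, ?_, ?_, ?_⟩ <;>
      simp [A1, A2, A3, hs, hc, hsx, hcx]
  · -- sphere
    intro s x
    rw [A1_abs]
    have h1 := Real.sin_sq_add_cos_sq s
    have h2 := Real.sin_sq_add_cos_sq x
    have h3 := sq_abs (Real.sin s)
    simp only [A2, A3]
    nlinarith [sq_abs (Real.sin s)]
  · -- preimage set
    ext ⟨s, x⟩
    simp only [Set.mem_setOf_eq, Set.mem_insert_iff, Set.mem_singleton_iff,
      Prod.mk.injEq, Set.mem_Ico]
    constructor
    · rintro ⟨⟨hs0, hs2⟩, ⟨hx0, hx2⟩, h1, h2, h3⟩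
      rw [A1_abs] at h1
      simp only [A2] at h2
      simp only [A3] at h3
      -- |sin s| = 1
      have hsq : Real.sin s ^ 2 = 1 := by nlinarith [Real.sin_sq_add_cos_sq s]
      have habs : |Real.sin s| = 1 := by
        rcases mul_eq_zero.mp (by nlinarith : (Real.sin s - 1) * (Real.sin s + 1) = 0) with h | h
        · rw [show Real.sin s = 1 by linarith]; norm_num
        · rw [show Real.sin s = -1 by linarith]; norm_num
      rw [habs, one_mul] at h1
      -- x = 0
      obtain ⟨n, hn⟩ := (Real.cos_eq_one_iff x).mp h1
      have hpi := Real.pi_pos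
      have hn0 : (0:ℝ) ≤ (n:ℝ) := by nlinarith
      have hn1 : (n:ℝ) < 1 := by nlinarith
      have : n = 0 := by
        have : (0:ℤ) ≤ n := by exact_mod_cast hn0
        have : n < 1 := by exact_mod_cast hn1
        omega
      subst this
      simp at hn
      -- s = π/2 or 3π/2
      obtain ⟨k, hk⟩ := Real.cos_eq_zero_iff.mp h3
      rw [hk] at hs0 hs2
      have hk0 : (-1:ℝ) < (k:ℝ) := by nlinarith
      have hk1 : (k:ℝ) < 2 := by nlinarith
      have hk0' : (-1:ℤ) < k := by exact_mod_cast hk0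
      have hk1' : k < 2 := by exact_mod_cast hk1
      interval_cases k
      · left; constructor
        · rw [hk]; push_cast; ring
        · exact hn.symm
      · right; constructor
        · rw [hk]; push_cast; ring
        · exact hn.symm
    · have hpi := Real.pi_pos
      rintro (⟨hs, hx⟩ | ⟨hs, hx⟩) <;> subst hs <;> subst hx
      · refine ⟨⟨by linarith, by linarith⟩, ⟨le_refl _, by linarith⟩, ?_, ?_, ?_⟩
        · rw [A1_abs]; simp [Real.sin_pi_div_two]
        · simp [A2]
        · simp [A3]
      · refine ⟨⟨by linarith, by linarith⟩, ⟨le_refl _, by linarith⟩, ?_, ?_, ?_⟩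
        · rw [A1_abs, sin_3pi2]; simp
        · simp [A2]
        · simp [A3, cos_3pi2]
  · rw [jac1, jac2, Real.sign_one]; norm_num
end

section
/- With A as above, the point p = (1,0,0) ∈ S² is a regular value of A with exactly two preimages (π/2, 0) and (3π/2, 0), and at both preimages the Jacobian determinant det(∂_s A, ∂_x A, A) is strictly positive (equal to sin s at (π/2,0) and to −sin s at (3π/2,0)). -/
open Real Set

/-!
Since `A1 s x = |sin s| * cos x`, the map `A` is smooth wherever `sin s ≠ 0`, and there a cofactor
expansion along the row of `A3` gives `det (∂ₛA, ∂ₓA, A) = |sin s|`, using `sin² + cos² = 1` twice.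
A preimage of `(1, 0, 0)` has `cos s = 0`, hence `s ∈ {π/2, 3π/2}` and `|sin s| = 1`, so the first
coordinate reduces to `cos x = 1`, i.e. `x = 0`.
-/

lemma sin_three_pi_div_two : sin (3 * π / 2) = -1 := by
  rw [show 3 * π / 2 = π / 2 + π by ring, sin_add_pi, sin_pi_div_two]

lemma cos_three_pi_div_two : cos (3 * π / 2) = 0 := by
  rw [show 3 * π / 2 = π / 2 + π by ring, cos_add_pi, cos_pi_div_two, neg_zero]

lemma cos_eq_zero_iff_of_mem_Ico {s : ℝ} (hs : s ∈ Ico 0 (2 * π)) :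
    cos s = 0 ↔ s = π / 2 ∨ s = 3 * π / 2 := by
  refine ⟨fun h => ?_, ?_⟩
  · obtain ⟨k, rfl⟩ := cos_eq_zero_iff.mp h
    have h0 : (0 : ℝ) ≤ 2 * k + 1 := by nlinarith [pi_pos, hs.1]
    have h4 : (2 * k + 1 : ℝ) < 4 := by nlinarith [pi_pos, hs.2]
    obtain rfl | rfl : k = 0 ∨ k = 1 := by
      have : (0 : ℤ) ≤ 2 * k + 1 := by exact_mod_cast h0
      have : 2 * k + 1 < (4 : ℤ) := by exact_mod_cast h4
      omega
    · left; push_cast; ring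
    · right; push_cast; ring
  · rintro (rfl | rfl)
    · exact cos_pi_div_two
    · exact cos_three_pi_div_two

lemma A1_eq_abs_sin_mul_cos (s x : ℝ) : A1 s x = |sin s| * cos x := by
  unfold A1
  split_ifs with h
  · rw [abs_of_nonneg h]
  · rw [abs_of_neg (not_le.mp h), neg_mul]

lemma A1_eq_cos_of_cos_eq_zero {s : ℝ} (hs : cos s = 0) (x : ℝ) : A1 s x = cos x := by
  rw [A1_eq_abs_sin_mul_cos, abs_sin_eq_sqrt_one_sub_cos_sq, hs]
  norm_num

lemma A_eq_one_zero_zero_iff {s x : ℝ} (hs : s ∈ Ico 0 (2 * π)) (hx : x ∈ Ico 0 (2 * π)) :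
    (A1 s x = 1 ∧ A2 s x = 0 ∧ A3 s x = 0) ↔ (s = π / 2 ∨ s = 3 * π / 2) ∧ x = 0 := by
  rw [← cos_eq_zero_iff_of_mem_Ico hs]
  have hx₁ : -(2 * π) < x := by linarith [pi_pos, hx.1]
  constructor
  · rintro ⟨h1, -, hcos⟩
    rw [A1_eq_cos_of_cos_eq_zero hcos, cos_eq_one_iff_of_lt_of_lt hx₁ hx.2] at h1
    exact ⟨hcos, h1⟩
  · rintro ⟨hcos, rfl⟩
    simp [A1_eq_cos_of_cos_eq_zero hcos, A2, A3, hcos]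

lemma contDiffAt_A {n : ℕ∞} {s : ℝ} (hs : sin s ≠ 0) (x : ℝ) :
    ContDiffAt ℝ n (fun p : ℝ × ℝ => (A1 p.1 p.2, A2 p.1 p.2, A3 p.1 p.2)) (s, x) := by
  simp only [A1_eq_abs_sin_mul_cos, A2, A3]
  have hsin : ContDiffAt ℝ n (fun p : ℝ × ℝ => sin p.1) (s, x) := contDiffAt_fst.sin
  exact ((hsin.abs hs).mul contDiffAt_snd.cos).prodMk
    ((hsin.mul contDiffAt_snd.sin).prodMk contDiffAt_fst.cos)

lemma jacA_eq_abs_sin {s : ℝ} (hs : sin s ≠ 0) (x : ℝ) : jacA s x = |sin s| := by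
  set σ : ℝ := (SignType.sign (sin s) : ℝ)
  have hA1s : deriv (fun s' => A1 s' x) s = σ * cos s * cos x := by
    simp only [A1_eq_abs_sin_mul_cos]
    exact (((hasDerivAt_abs hs).comp s (hasDerivAt_sin s)).mul_const _).deriv
  have hA1x : deriv (fun x' => A1 s x') x = -(|sin s| * sin x) := by
    simp only [A1_eq_abs_sin_mul_cos]
    exact ((hasDerivAt_cos x).const_mul _).deriv.trans (by ring)
  have hA2s : deriv (fun s' => A2 s' x) s = cos s * sin x :=
    ((hasDerivAt_sin s).mul_const _).deriv
  have hA2x : deriv (fun x' => A2 s x') x = sin s * cos x :=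
    ((hasDerivAt_sin x).const_mul _).deriv
  have hA3s : deriv (fun s' => A3 s' x) s = -sin s := (hasDerivAt_cos s).deriv
  have hA3x : deriv (fun x' => A3 s x') x = 0 := deriv_const _ _
  have habs : |sin s| = σ * sin s := (sign_mul_self _).symm
  rw [jacA, hA1s, hA1x, hA2s, hA2x, hA3s, hA3x, Matrix.det_fin_three]
  simp only [Matrix.of_apply, Matrix.cons_val', Matrix.cons_val_zero, Matrix.cons_val_one,
    Matrix.cons_val_two, Matrix.empty_val', Matrix.cons_val_fin_one, Matrix.tail_cons,
    Matrix.vecHead, A1_eq_abs_sin_mul_cos, A2, A3, habs]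
  linear_combination σ * sin s * (sin x ^ 2 + cos x ^ 2) * sin_sq_add_cos_sq s +
    σ * sin s * sin_sq_add_cos_sq x

/-- `p = (1,0,0)` is a regular value of `A` with exactly the two preimages `(π/2,0)` and
`(3π/2,0)` (in the fundamental domain `[0,2π) × [0,2π)`); `A` is differentiable at both
preimages, and there the Jacobian determinant `det(∂ₛA, ∂ₓA, A)` is strictly positive,
equal to `sin s` at `(π/2,0)` and to `−sin s` at `(3π/2,0)`. -/
theorem stmt1 :
    ({p : ℝ × ℝ | p.1 ∈ Ico 0 (2*π) ∧ p.2 ∈ Ico 0 (2*π) ∧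
        A1 p.1 p.2 = 1 ∧ A2 p.1 p.2 = 0 ∧ A3 p.1 p.2 = 0}
      = {(π/2, 0), (3*π/2, 0)}) ∧
    ContDiffAt ℝ 1 (fun p : ℝ × ℝ => (A1 p.1 p.2, A2 p.1 p.2, A3 p.1 p.2)) (π/2, 0) ∧
    ContDiffAt ℝ 1 (fun p : ℝ × ℝ => (A1 p.1 p.2, A2 p.1 p.2, A3 p.1 p.2)) (3*π/2, 0) ∧
    jacA (π/2) 0 = Real.sin (π/2) ∧
    jacA (3*π/2) 0 = -Real.sin (3*π/2) ∧
    0 < jacA (π/2) 0 ∧ 0 < jacA (3*π/2) 0 := by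
  have h₁ : sin (π / 2) ≠ 0 := by simp
  have h₃ : sin (3 * π / 2) ≠ 0 := by simp [sin_three_pi_div_two]
  have hπ : 0 < π := pi_pos
  refine ⟨?_, contDiffAt_A h₁ 0, contDiffAt_A h₃ 0, ?_, ?_, ?_, ?_⟩
  · ext ⟨s, x⟩
    simp only [mem_ofPred_eq, mem_insert_iff, mem_singleton_iff, Prod.mk.injEq]
    constructor
    · rintro ⟨hs, hx, hA⟩
      obtain ⟨rfl | rfl, rfl⟩ := (A_eq_one_zero_zero_iff hs hx).mp hA <;> simp
    · intro h
      have hs : s ∈ Ico 0 (2 * π) := by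
        rcases h with ⟨rfl, -⟩ | ⟨rfl, -⟩ <;> constructor <;> linarith
      have hx : x ∈ Ico 0 (2 * π) := by
        rcases h with ⟨-, rfl⟩ | ⟨-, rfl⟩ <;> constructor <;> linarith
      exact ⟨hs, hx, (A_eq_one_zero_zero_iff hs hx).mpr (by tauto)⟩
  · rw [jacA_eq_abs_sin h₁, sin_pi_div_two, abs_one]
  · rw [jacA_eq_abs_sin h₃, sin_three_pi_div_two, abs_neg, abs_one, neg_neg]
  · exact (jacA_eq_abs_sin h₁ 0).symm ▸ abs_pos.mpr h₁
  · exact (jacA_eq_abs_sin h₃ 0).symm ▸ abs_pos.mpr h₃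
end

section
/- Let θ : [0,T] → ℝ be a C² function and define w(t) := −θ″(t) + sin θ(t) cos θ(t). Define φ(t,x) := (cos θ(t) cos x, cos θ(t) sin x, sin θ(t)) and f(t,x) := w(t)·(−sin θ(t) cos x, −sin θ(t) sin x, cos θ(t)). Then φ takes values in S² and satisfies the controlled wave maps equation □φ = (|φ_t|² − |φ_x|²)φ + f, where moreover f(t,x) is orthogonal to φ(t,x) for all (t,x) (so f = f^{φ⊥}). -/
open Real

/-- Partial derivative in time of a scalar field on `ℝ × S¹`. -/
noncomputable def dt (g : ℝ → ℝ → ℝ) (t x : ℝ) : ℝ := deriv (fun t' => g t' x) t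

/-- Partial derivative in space. -/
noncomputable def dx (g : ℝ → ℝ → ℝ) (t x : ℝ) : ℝ := deriv (fun x' => g t x') x

/-- d'Alembertian `□ = −∂_{tt} + ∂_{xx}`. -/
noncomputable def box (g : ℝ → ℝ → ℝ) (t x : ℝ) : ℝ := -(dt (dt g) t x) + dx (dx g) t x

/-!
Along the ansatz `φ = (cos θ cos x, cos θ sin x, sin θ)` every component is a product
`a(t) b(x)`, so `□` acts on it as `−a″ b + a b″`. The two energy densities are
`|φ_t|² = θ′²` and `|φ_x|² = cos² θ`, and comparing both sides of the equation componentwise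
leaves exactly the term `(−θ″ + sin θ cos θ)·∂_θ φ`, which is `f`. Since `∂_θ φ` is tangent
to `S²` at `φ`, so is `f`.
-/

section Separable

variable {a a' a'' b b' b'' : ℝ → ℝ}

theorem dt_mul_sep (ha : ∀ t, HasDerivAt a (a' t) t) :
    dt (fun t x => a t * b x) = fun t x => a' t * b x :=
  funext₂ fun t x => ((ha t).mul_const (b x)).deriv

theorem dx_mul_sep (hb : ∀ x, HasDerivAt b (b' x) x) :
    dx (fun t x => a t * b x) = fun t x => a t * b' x :=
  funext₂ fun t x => ((hb x).const_mul (a t)).deriv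

theorem box_mul_sep (ha : ∀ t, HasDerivAt a (a' t) t) (ha' : ∀ t, HasDerivAt a' (a'' t) t)
    (hb : ∀ x, HasDerivAt b (b' x) x) (hb' : ∀ x, HasDerivAt b' (b'' x) x) (t x : ℝ) :
    box (fun t x => a t * b x) t x = -(a'' t * b x) + a t * b'' x := by
  simp only [box, dt_mul_sep ha, dt_mul_sep ha', dx_mul_sep hb, dx_mul_sep hb']

end Separable

section Equatorial

variable {θ θ' θ'' : ℝ → ℝ}

theorem hasDerivAt_neg_sin_comp_mul (h₁ : ∀ t, HasDerivAt θ (θ' t) t)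
    (h₂ : ∀ t, HasDerivAt θ' (θ'' t) t) (t : ℝ) :
    HasDerivAt (fun t => -sin (θ t) * θ' t)
      (-(cos (θ t) * θ' t ^ 2 + sin (θ t) * θ'' t)) t :=
  ((h₁ t).sin.neg.mul (h₂ t)).congr_deriv (by rw [Pi.neg_apply]; ring)

theorem hasDerivAt_cos_comp_mul (h₁ : ∀ t, HasDerivAt θ (θ' t) t)
    (h₂ : ∀ t, HasDerivAt θ' (θ'' t) t) (t : ℝ) :
    HasDerivAt (fun t => cos (θ t) * θ' t) (cos (θ t) * θ'' t - sin (θ t) * θ' t ^ 2) t :=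
  ((h₁ t).cos.mul (h₂ t)).congr_deriv (by ring)

theorem dt_equatorial_sq_sum (h₁ : ∀ t, HasDerivAt θ (θ' t) t) (t x : ℝ) :
    dt (fun t x => cos (θ t) * cos x) t x ^ 2 + dt (fun t x => cos (θ t) * sin x) t x ^ 2 +
      dt (fun t _ => sin (θ t) * 1) t x ^ 2 = θ' t ^ 2 := by
  simp only [dt_mul_sep fun t => (h₁ t).cos, dt_mul_sep fun t => (h₁ t).sin]
  linear_combination (θ' t ^ 2 * sin (θ t) ^ 2) * sin_sq_add_cos_sq x +
    θ' t ^ 2 * sin_sq_add_cos_sq (θ t)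

theorem dx_equatorial_sq_sum (t x : ℝ) :
    dx (fun t x => cos (θ t) * cos x) t x ^ 2 + dx (fun t x => cos (θ t) * sin x) t x ^ 2 +
      dx (fun t _ => sin (θ t) * 1) t x ^ 2 = cos (θ t) ^ 2 := by
  simp only [dx_mul_sep hasDerivAt_cos, dx_mul_sep hasDerivAt_sin,
    dx_mul_sep fun x => hasDerivAt_const x (1 : ℝ)]
  linear_combination cos (θ t) ^ 2 * sin_sq_add_cos_sq x

theorem box_equatorial₁ (h₁ : ∀ t, HasDerivAt θ (θ' t) t)
    (h₂ : ∀ t, HasDerivAt θ' (θ'' t) t) (t x : ℝ) :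
    box (fun t x => cos (θ t) * cos x) t x =
      (θ' t ^ 2 - cos (θ t) ^ 2) * (cos (θ t) * cos x) +
        (-θ'' t + sin (θ t) * cos (θ t)) * -(sin (θ t) * cos x) := by
  rw [box_mul_sep (fun t => (h₁ t).cos) (hasDerivAt_neg_sin_comp_mul h₁ h₂) hasDerivAt_cos
    fun x => (hasDerivAt_sin x).neg]
  linear_combination cos (θ t) * cos x * sin_sq_add_cos_sq (θ t)

theorem box_equatorial₂ (h₁ : ∀ t, HasDerivAt θ (θ' t) t)
    (h₂ : ∀ t, HasDerivAt θ' (θ'' t) t) (t x : ℝ) :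
    box (fun t x => cos (θ t) * sin x) t x =
      (θ' t ^ 2 - cos (θ t) ^ 2) * (cos (θ t) * sin x) +
        (-θ'' t + sin (θ t) * cos (θ t)) * -(sin (θ t) * sin x) := by
  rw [box_mul_sep (fun t => (h₁ t).cos) (hasDerivAt_neg_sin_comp_mul h₁ h₂) hasDerivAt_sin
    fun x => hasDerivAt_cos x]
  linear_combination cos (θ t) * sin x * sin_sq_add_cos_sq (θ t)

theorem box_equatorial₃ (h₁ : ∀ t, HasDerivAt θ (θ' t) t)
    (h₂ : ∀ t, HasDerivAt θ' (θ'' t) t) (t x : ℝ) :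
    box (fun t _ => sin (θ t) * 1) t x =
      (θ' t ^ 2 - cos (θ t) ^ 2) * (sin (θ t) * 1) +
        (-θ'' t + sin (θ t) * cos (θ t)) * cos (θ t) := by
  rw [box_mul_sep (fun t => (h₁ t).sin) (hasDerivAt_cos_comp_mul h₁ h₂)
    (fun x => hasDerivAt_const x (1 : ℝ)) fun x => hasDerivAt_const x (0 : ℝ)]
  ring

end Equatorial

/-- For `θ ∈ C²`, `w = −θ″ + sin θ cos θ`,
`φ(t,x) = (cos θ(t) cos x, cos θ(t) sin x, sin θ(t))` and
`f(t,x) = w(t)·(−sin θ(t) cos x, −sin θ(t) sin x, cos θ(t))`, the map `φ` is `S²`-valued,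
`f ⟂ φ` pointwise (so `f = f^{φ⊥}`), and `φ` solves `□φ = (|φ_t|² − |φ_x|²)φ + f`. -/
theorem stmt8 (θ w : ℝ → ℝ) (hθ : ContDiff ℝ 2 θ)
    (hw : ∀ t, w t = -(deriv (deriv θ) t) + Real.sin (θ t) * Real.cos (θ t))
    (φ1 φ2 φ3 f1 f2 f3 : ℝ → ℝ → ℝ)
    (hφ1 : ∀ t x, φ1 t x = Real.cos (θ t) * Real.cos x)
    (hφ2 : ∀ t x, φ2 t x = Real.cos (θ t) * Real.sin x)
    (hφ3 : ∀ t x, φ3 t x = Real.sin (θ t))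
    (hf1 : ∀ t x, f1 t x = w t * (-(Real.sin (θ t) * Real.cos x)))
    (hf2 : ∀ t x, f2 t x = w t * (-(Real.sin (θ t) * Real.sin x)))
    (hf3 : ∀ t x, f3 t x = w t * Real.cos (θ t)) :
    (∀ t x, (φ1 t x)^2 + (φ2 t x)^2 + (φ3 t x)^2 = 1) ∧
    (∀ t x, f1 t x * φ1 t x + f2 t x * φ2 t x + f3 t x * φ3 t x = 0) ∧
    (∀ t x,
      box φ1 t x =
        (((dt φ1 t x)^2 + (dt φ2 t x)^2 + (dt φ3 t x)^2) -
          ((dx φ1 t x)^2 + (dx φ2 t x)^2 + (dx φ3 t x)^2)) * φ1 t x + f1 t x ∧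
      box φ2 t x =
        (((dt φ1 t x)^2 + (dt φ2 t x)^2 + (dt φ3 t x)^2) -
          ((dx φ1 t x)^2 + (dx φ2 t x)^2 + (dx φ3 t x)^2)) * φ2 t x + f2 t x ∧
      box φ3 t x =
        (((dt φ1 t x)^2 + (dt φ2 t x)^2 + (dt φ3 t x)^2) -
          ((dx φ1 t x)^2 + (dx φ2 t x)^2 + (dx φ3 t x)^2)) * φ3 t x + f3 t x) := by
  have h₁ : ∀ t, HasDerivAt θ (deriv θ t) t :=
    fun t => (hθ.differentiable two_ne_zero t).hasDerivAt
  have h₂ : ∀ t, HasDerivAt (deriv θ) (deriv (deriv θ) t) t :=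
    fun t => (hθ.differentiable_deriv_two t).hasDerivAt
  obtain rfl : φ1 = fun t x => cos (θ t) * cos x := funext₂ hφ1
  obtain rfl : φ2 = fun t x => cos (θ t) * sin x := funext₂ hφ2
  -- `φ3` is written as a product `a t * b x` so that the separable-field lemmas apply
  obtain rfl : φ3 = fun t _ => sin (θ t) * 1 :=
    funext₂ fun t x => (hφ3 t x).trans (mul_one _).symm
  obtain rfl : w = fun t => -deriv (deriv θ) t + sin (θ t) * cos (θ t) := funext hw
  obtain rfl : f1 = _ := funext₂ hf1
  obtain rfl : f2 = _ := funext₂ hf2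
  obtain rfl : f3 = _ := funext₂ hf3
  refine ⟨fun t x => ?_, fun t x => ?_, fun t x => ?_⟩
  · linear_combination cos (θ t) ^ 2 * sin_sq_add_cos_sq x + sin_sq_add_cos_sq (θ t)
  · linear_combination -((-deriv (deriv θ) t + sin (θ t) * cos (θ t)) * sin (θ t) * cos (θ t)) *
      sin_sq_add_cos_sq x
  · simp only [dt_equatorial_sq_sum h₁, dx_equatorial_sq_sum]
    exact ⟨box_equatorial₁ h₁ h₂ t x, box_equatorial₂ h₁ h₂ t x, box_equatorial₃ h₁ h₂ t x⟩
end

section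
/- With φ(t,x) = (cos θ(t) cos x, cos θ(t) sin x, sin θ(t)) as above, the energy E(t) = ∫_{S¹} (|φ_x|² + |φ_t|²)(t,x) dx equals 2π(θ′(t)² + cos² θ(t)). Consequently, for any T > 0 there exists θ ∈ C²([0,T]) with θ(0) = θ′(0) = 0 (so E(0) = 2π) and E(T) < 2π. -/
open Real

/-- Energy `E(t) = ∫_{S¹} (|φ_x|² + |φ_t|²) dx` of the `S²`-valued map with components
`φ1, φ2, φ3`. -/
noncomputable def Energy (φ1 φ2 φ3 : ℝ → ℝ → ℝ) (t : ℝ) : ℝ :=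
  ∫ x in (0:ℝ)..(2*π),
    ((dx φ1 t x)^2 + (dx φ2 t x)^2 + (dx φ3 t x)^2 +
      (dt φ1 t x)^2 + (dt φ2 t x)^2 + (dt φ3 t x)^2)

/-! The energy density of `φ` is `cos² θ` from `φ_x` plus `θ′²` from `φ_t` (the sphere metric
in latitude–longitude coordinates), independently of `x`; so `E(t)` is `2π` times it, and any
`θ` climbing from the equator to the pole with zero final speed makes `E(T) = 0`. -/

local notation "𝓔[" θ "]" =>
  Energy (fun t x => cos (θ t) * cos x) (fun t x => cos (θ t) * sin x) (fun t _ => sin (θ t))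

lemma energy_density_latitude {θ : ℝ → ℝ} {θ' t : ℝ} (hθ : HasDerivAt θ θ' t) (x : ℝ) :
    (dx (fun t x => cos (θ t) * cos x) t x)^2 + (dx (fun t x => cos (θ t) * sin x) t x)^2 +
      (dx (fun t _ => sin (θ t)) t x)^2 + (dt (fun t x => cos (θ t) * cos x) t x)^2 +
      (dt (fun t x => cos (θ t) * sin x) t x)^2 + (dt (fun t _ => sin (θ t)) t x)^2
      = θ'^2 + cos (θ t)^2 := by
  have h₁ : dx (fun t x => cos (θ t) * cos x) t x = cos (θ t) * -sin x :=
    ((hasDerivAt_cos x).const_mul _).deriv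
  have h₂ : dx (fun t x => cos (θ t) * sin x) t x = cos (θ t) * cos x :=
    ((hasDerivAt_sin x).const_mul _).deriv
  have h₃ : dx (fun t _ => sin (θ t)) t x = 0 := deriv_const _ _
  have h₄ : dt (fun t x => cos (θ t) * cos x) t x = -sin (θ t) * θ' * cos x :=
    (hθ.cos.mul_const _).deriv
  have h₅ : dt (fun t x => cos (θ t) * sin x) t x = -sin (θ t) * θ' * sin x :=
    (hθ.cos.mul_const _).deriv
  have h₆ : dt (fun t _ => sin (θ t)) t x = cos (θ t) * θ' := hθ.sin.deriv
  rw [h₁, h₂, h₃, h₄, h₅, h₆]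
  linear_combination (cos (θ t)^2 + θ'^2 * sin (θ t)^2) * sin_sq_add_cos_sq x +
    θ'^2 * sin_sq_add_cos_sq (θ t)

lemma energy_latitude_eq {θ : ℝ → ℝ} {t : ℝ} (hθ : DifferentiableAt ℝ θ t) :
    𝓔[θ] t = 2 * π * (deriv θ t ^ 2 + cos (θ t)^2) := by
  rw [Energy, intervalIntegral.integral_congr fun x _ => energy_density_latitude hθ.hasDerivAt x,
    intervalIntegral.integral_const, smul_eq_mul]
  ring

noncomputable def raisedCosine (T t : ℝ) : ℝ := π / 4 * (1 - cos (π * t / T))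

lemma contDiff_raisedCosine (T : ℝ) : ContDiff ℝ 2 (raisedCosine T) := by
  unfold raisedCosine
  fun_prop

lemma hasDerivAt_raisedCosine (T t : ℝ) :
    HasDerivAt (raisedCosine T) (π / 4 * (sin (π * t / T) * (π / T))) t := by
  have hlin : HasDerivAt (fun t => π * t / T) (π / T) t := by
    simpa using ((hasDerivAt_id t).const_mul π).div_const T
  exact (hlin.cos.const_sub 1).const_mul (π / 4) |>.congr_deriv (by ring)

lemma raisedCosine_zero (T : ℝ) : raisedCosine T 0 = 0 := by
  simp [raisedCosine]

lemma raisedCosine_self {T : ℝ} (hT : T ≠ 0) : raisedCosine T T = π / 2 := by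
  rw [raisedCosine, mul_div_cancel_right₀ _ hT, cos_pi]
  ring

lemma deriv_raisedCosine_zero (T : ℝ) : deriv (raisedCosine T) 0 = 0 := by
  simp [(hasDerivAt_raisedCosine T 0).deriv]

lemma deriv_raisedCosine_self {T : ℝ} (hT : T ≠ 0) : deriv (raisedCosine T) T = 0 := by
  simp [(hasDerivAt_raisedCosine T T).deriv, mul_div_cancel_right₀ _ hT]

/-- For `φ(t,x) = (cos θ(t) cos x, cos θ(t) sin x, sin θ(t))` the energy equals
`2π(θ′(t)² + cos² θ(t))`; consequently for any `T > 0` there is `θ ∈ C²` with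
`θ(0) = θ′(0) = 0` (so `E(0) = 2π`) and `E(T) < 2π`. -/
theorem stmt9 :
    (∀ θ : ℝ → ℝ, ContDiff ℝ 2 θ → ∀ t : ℝ,
      Energy (fun t x => Real.cos (θ t) * Real.cos x)
        (fun t x => Real.cos (θ t) * Real.sin x)
        (fun t _ => Real.sin (θ t)) t
        = 2*π*((deriv θ t)^2 + (Real.cos (θ t))^2)) ∧
    (∀ T : ℝ, 0 < T → ∃ θ : ℝ → ℝ, ContDiff ℝ 2 θ ∧ θ 0 = 0 ∧ deriv θ 0 = 0 ∧
      Energy (fun t x => Real.cos (θ t) * Real.cos x)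
        (fun t x => Real.cos (θ t) * Real.sin x)
        (fun t _ => Real.sin (θ t)) 0 = 2*π ∧
      Energy (fun t x => Real.cos (θ t) * Real.cos x)
        (fun t x => Real.cos (θ t) * Real.sin x)
        (fun t _ => Real.sin (θ t)) T < 2*π) := by
  refine ⟨fun θ hθ t => energy_latitude_eq (hθ.differentiable two_ne_zero t), fun T hT => ?_⟩
  have hθ := contDiff_raisedCosine T
  refine ⟨raisedCosine T, hθ, raisedCosine_zero T, deriv_raisedCosine_zero T, ?_, ?_⟩
  · rw [energy_latitude_eq (hθ.differentiable two_ne_zero 0), deriv_raisedCosine_zero,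
      raisedCosine_zero]
    simp
  · rw [energy_latitude_eq (hθ.differentiable two_ne_zero T), deriv_raisedCosine_self hT.ne',
      raisedCosine_self hT.ne', cos_pi_div_two]
    simpa using pi_pos
end

section
/- Suppose a₀ ∈ (0,1), E₀ > 0, and real sequences (a_n)_{n∈ℤ}, (f_n)_{n∈ℤ} (valued in ℝ^{k+1}) satisfy a_n(E₀/(2π) − n²) = f_n with |f_n| ≤ Cδ for all n, and suppose δ_* := dist(E₀, {2πn² : n ∈ ℕ}) > 0 and E₀ ≤ M. Then |a_n| ≤ C′ δ/(δ_* n²) for all n ≠ 0, where C′ depends only on M and C. Consequently, if the function φ̃(x) = Σ a_n e^{inx} satisfies |φ̃(x)| ≥ 1/2 for all x, then δ_* ≤ C″ δ for a constant C″ depending only on M and C. -/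
open Real

/-! Write `r_n = E₀/(2π) - n²`, so `‖a_n‖ |r_n| ≤ Cδ`. Since `E₀ ≤ M`, the distance
`|E₀ - 2πn²|` is at least `δ_*`, and for `n² > M/π` it is at least `πn²` as well; in both
regimes `δ_* n² ≲_M |E₀ - 2πn²|`, which gives the decay `‖a_n‖ ≲ δ/(δ_* n²)`. Together with
`‖a_0‖ ≤ 2πCδ/δ_*` this bounds `∑ ‖a_n‖ ≲ δ/δ_*` by `∑ 1/n² = π²/3`, and evaluating `φ̃` at
`x = 0` gives `1/2 ≤ ∑ ‖a_n‖`. -/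

theorem hasSum_one_div_intCast_sq : HasSum (fun n : ℤ => 1 / (n : ℝ) ^ 2) (π ^ 2 / 3) := by
  have h := HasSum.of_nat_of_neg (f := fun n : ℤ => 1 / (n : ℝ) ^ 2)
    (by simpa using hasSum_zeta_two) (by simpa using hasSum_zeta_two)
  rwa [show π ^ 2 / 6 + π ^ 2 / 6 - 1 / ((0 : ℤ) : ℝ) ^ 2 = π ^ 2 / 3 by norm_num; ring] at h

theorem summable_norm_and_tsum_le_of_norm_le_div_sq {V : Type*} [NormedAddCommGroup V]
    {a : ℤ → V} {A B : ℝ} (h₀ : ‖a 0‖ ≤ A) (h : ∀ n ≠ 0, ‖a n‖ ≤ B / (n : ℝ) ^ 2) :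
    Summable (fun n => ‖a n‖) ∧ ∑' n, ‖a n‖ ≤ A + B * (π ^ 2 / 3) := by
  -- `1 / 0 ^ 2 = 0` in Lean, so the second summand of the majorant vanishes at `n = 0`
  have hmaj : HasSum (fun n : ℤ => A * (if n = 0 then 1 else 0) + B * (1 / (n : ℝ) ^ 2))
      (A * 1 + B * (π ^ 2 / 3)) :=
    ((hasSum_ite_eq 0 1).mul_left A).add (hasSum_one_div_intCast_sq.mul_left B)
  have hle : ∀ n, ‖a n‖ ≤ A * (if n = 0 then 1 else 0) + B * (1 / (n : ℝ) ^ 2) := by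
    intro n
    rcases eq_or_ne n 0 with rfl | hn
    · simpa using h₀
    · simpa [hn, div_eq_mul_one_div B] using h n hn
  have hsum : Summable (fun n => ‖a n‖) :=
    hmaj.summable.of_nonneg_of_le (fun _ => norm_nonneg _) hle
  exact ⟨hsum, mul_one A ▸ hasSum_le hle hsum.hasSum hmaj⟩

theorem ciInf_abs_sub_mul_sq_le (c E : ℝ) (n : ℤ) :
    ⨅ m : ℕ, |E - c * (m : ℝ) ^ 2| ≤ |E - c * (n : ℝ) ^ 2| := by
  have hbdd : BddBelow (Set.range fun m : ℕ => |E - c * (m : ℝ) ^ 2|) :=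
    ⟨0, by rintro _ ⟨m, rfl⟩; positivity⟩
  simpa [Nat.cast_natAbs, sq_abs] using ciInf_le hbdd n.natAbs

theorem mul_sq_le_of_le_abs_sub {c d E M x : ℝ} (hc : 0 < c) (hd : 0 ≤ d) (hdM : d ≤ M)
    (hEM : E ≤ M) (h : d ≤ |E - c * x ^ 2|) : d * x ^ 2 ≤ 2 * M / c * |E - c * x ^ 2| := by
  rcases le_or_gt (x ^ 2) (2 * M / c) with hx | hx
  · calc d * x ^ 2 ≤ |E - c * x ^ 2| * (2 * M / c) := mul_le_mul h hx (sq_nonneg x) (abs_nonneg _)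
      _ = _ := mul_comm _ _
  · have hcx : 2 * M < c * x ^ 2 := by rwa [div_lt_iff₀' hc] at hx
    calc d * x ^ 2 ≤ M * x ^ 2 := by gcongr
      _ = 2 * M / c * (c * x ^ 2 / 2) := by field_simp
      _ ≤ 2 * M / c * |E - c * x ^ 2| := by
        gcongr
        · exact div_nonneg (by linarith) hc.le
        · rw [abs_sub_comm]; exact le_abs.2 (Or.inl (by linarith))

section

variable {V : Type*} [NormedAddCommGroup V] [NormedSpace ℝ V]

theorem norm_mul_abs_sub_le_of_smul_eq {c E x B : ℝ} {v w : V} (hc : 0 < c)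
    (hvw : (E / c - x) • v = w) (hw : ‖w‖ ≤ B) : ‖v‖ * |E - c * x| ≤ c * B := by
  have hscale : |E - c * x| = c * |E / c - x| := by
    rw [← abs_of_pos hc, ← abs_mul, abs_of_pos hc, mul_sub, mul_div_cancel₀ _ hc.ne']
  calc ‖v‖ * |E - c * x| = c * ‖w‖ := by rw [← hvw, norm_smul, Real.norm_eq_abs, hscale]; ring
    _ ≤ c * B := by gcongr

theorem norm_mul_mul_sq_le_of_smul_eq {c d E M x B : ℝ} {v w : V} (hc : 0 < c) (hd : 0 ≤ d)
    (hdM : d ≤ M) (hEM : E ≤ M) (h : d ≤ |E - c * x ^ 2|) (hvw : (E / c - x ^ 2) • v = w)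
    (hw : ‖w‖ ≤ B) : ‖v‖ * (d * x ^ 2) ≤ 2 * M * B :=
  calc ‖v‖ * (d * x ^ 2) ≤ ‖v‖ * (2 * M / c * |E - c * x ^ 2|) :=
        mul_le_mul_of_nonneg_left (mul_sq_le_of_le_abs_sub hc hd hdM hEM h) (norm_nonneg v)
    _ = 2 * M / c * (‖v‖ * |E - c * x ^ 2|) := by ring
    _ ≤ 2 * M / c * (c * B) :=
        mul_le_mul_of_nonneg_left (norm_mul_abs_sub_le_of_smul_eq hc hvw hw)
          (div_nonneg (by linarith) hc.le)
    _ = 2 * M * B := by field_simp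

end

/-- Step 4 of the convergence-to-harmonic-maps argument: if the (real, `ℝ^{k+1}`-valued)
Fourier data satisfies `a_n (E₀/(2π) − n²) = f_n` with `|f_n| ≤ Cδ`, `E₀ ≤ M`, and
`δ_* = dist(E₀, {2πn² : n ∈ ℕ}) > 0`, then `|a_n| ≤ C′δ/(δ_* n²)` for `n ≠ 0`; moreover if
`φ̃(x) = Σ a_n e^{inx}` satisfies `|φ̃| ≥ 1/2` everywhere, then `δ_* ≤ C″δ`, with `C′, C″`
depending only on `M` and `C`. -/
theorem stmt13 (M C : ℝ) (hM : 0 < M) (hC : 0 < C) :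
    ∃ C' C'' : ℝ, 0 < C' ∧ 0 < C'' ∧
      ∀ (k : ℕ) (E₀ δ δstar : ℝ) (a f : ℤ → EuclideanSpace ℂ (Fin (k+1))),
        0 < E₀ → E₀ ≤ M → 0 < δ → δ < 1 →
        δstar = ⨅ n : ℕ, |E₀ - 2*π*(n:ℝ)^2| → 0 < δstar →
        (∀ n : ℤ, ((E₀/(2*π) - (n:ℝ)^2 : ℝ)) • a n = f n) →
        (∀ (n : ℤ) (i : Fin (k+1)), (a n i).im = 0 ∧ (f n i).im = 0) →
        (∀ n : ℤ, ‖f n‖ ≤ C * δ) →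
        ((∀ n : ℤ, n ≠ 0 → ‖a n‖ ≤ C' * δ / (δstar * (n:ℝ)^2)) ∧
          ((∀ x : ℝ,
              (1/2 : ℝ) ≤ ‖∑' n : ℤ, Complex.exp ((n : ℂ) * (x : ℂ) * Complex.I) • a n‖) →
            δstar ≤ C'' * δ)) := by
  refine ⟨2 * M * C, 2 * (2 * π * C + 2 * M * C * (π ^ 2 / 3)), by positivity, by positivity, ?_⟩
  intro k E₀ δ δstar a f hE₀ hEM _ _ hδstar hpos ha _ hf
  have hgap (n : ℤ) : δstar ≤ |E₀ - 2 * π * (n : ℝ) ^ 2| := hδstar ▸ ciInf_abs_sub_mul_sq_le _ _ n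
  have hδE : δstar ≤ E₀ := by simpa [abs_of_pos hE₀] using hgap 0
  have hdecay (n : ℤ) (hn : n ≠ 0) : ‖a n‖ ≤ 2 * M * C * δ / (δstar * (n : ℝ) ^ 2) := by
    rw [le_div_iff₀ (by positivity), mul_assoc]
    exact norm_mul_mul_sq_le_of_smul_eq (by positivity) hpos.le (hδE.trans hEM) hEM (hgap n)
      (ha n) (hf n)
  refine ⟨hdecay, fun hφ => ?_⟩
  have h₀ : ‖a 0‖ ≤ 2 * π * C * δ / δstar := by
    have := norm_mul_abs_sub_le_of_smul_eq (by positivity) (ha 0) (hf 0)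
    simp only [Int.cast_zero, zero_pow two_ne_zero, mul_zero, sub_zero, abs_of_pos hE₀] at this
    rw [le_div_iff₀ hpos]
    calc ‖a 0‖ * δstar ≤ ‖a 0‖ * E₀ := by gcongr
      _ ≤ 2 * π * C * δ := this.trans_eq (by ring)
  obtain ⟨hsum, hle⟩ := summable_norm_and_tsum_le_of_norm_le_div_sq h₀
    (B := 2 * M * C * δ / δstar) fun n hn => (hdecay n hn).trans_eq (by field_simp)
  have hhalf : 1 / 2 ≤ ∑' n, ‖a n‖ := by
    simpa using (hφ 0).trans (norm_tsum_le_tsum_norm (by simpa using hsum))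
  have hfinal : 1 / 2 ≤ (2 * π * C + 2 * M * C * (π ^ 2 / 3)) * δ / δstar :=
    (hhalf.trans hle).trans_eq (by ring)
  rw [le_div_iff₀ hpos] at hfinal
  linarith
end
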